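/- A vector g ∈ ℝ^{k×n} is a circuit of the bounded-size partition polytope PP(κ±) if and only if g describes a single cyclical exchange or a single sequential movement of items among the clusters. -/

import Mathlib

/-!
STATEMENT 16: A vector g ∈ ℝ^{k×n} is a circuit of the bounded-size partition polytope PP(κ±)
iff g describes a single cyclical exchange or a single sequential movement of items among the
clusters.
-/

/-- The bounded-size partition polytope `PP(κ±) ⊆ ℝ^{k×n}`. -/
def PPpm {k n : ℕ} (κm κp : Fin k → ℕ) : Set (Fin k × Fin n → ℝ) :=
  {y | (∀ j, ∑ i, y (i, j) = 1) ∧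
       (∀ i, (κm i : ℝ) ≤ ∑ j, y (i, j)) ∧
       (∀ i, ∑ j, y (i, j) ≤ (κp i : ℝ)) ∧
       ∀ p, 0 ≤ y p}

/-- The inequality-constraint rows of the system defining `PP(κ±)` applied to `x`:
the lower and upper cluster-size constraints and the nonnegativity constraints. -/
def PPpmIneq {k n : ℕ} (x : Fin k × Fin n → ℝ) : Fin k ⊕ Fin k ⊕ Fin k × Fin n → ℝ :=
  Sum.elim (fun i => -(∑ j, x (i, j)))
    (Sum.elim (fun i => ∑ j, x (i, j)) fun p => -(x p))

/-- `g` is a circuit of the constraint system defining `PP(κ±)`: `g` is a nonzero element of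
the kernel of the equality constraints with coprime integer components such that `B g` is
support-minimal, where `B` collects the inequality constraints. -/
def IsCircuitPPpm {k n : ℕ} (g : Fin k × Fin n → ℝ) : Prop :=
  (∀ j, ∑ i, g (i, j) = 0) ∧ g ≠ 0 ∧
  (∃ gz : Fin k × Fin n → ℤ, (∀ p, g p = (gz p : ℝ)) ∧ Finset.univ.gcd gz = 1) ∧
  ¬ ∃ y : Fin k × Fin n → ℝ, (∀ j, ∑ i, y (i, j) = 0) ∧ y ≠ 0 ∧
      {r | PPpmIneq y r ≠ 0} ⊂ {r | PPpmIneq g r ≠ 0}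

/-- `g` describes a single sequential movement of items along distinct clusters
`c 0, c 1, …, c m` via distinct items `jj 1, …, jj m`. -/
def IsSequentialMovement {k n : ℕ} (g : Fin k × Fin n → ℝ) : Prop :=
  ∃ (m : ℕ) (_ : 1 ≤ m) (c : Fin (m + 1) → Fin k) (jj : Fin m → Fin n),
    Function.Injective c ∧ Function.Injective jj ∧
    g = ∑ t : Fin m,
      (Pi.single (c t.succ, jj t) (1 : ℝ) - Pi.single (c t.castSucc, jj t) (1 : ℝ))

/-- `g` describes a single cyclical exchange of items among distinct clusters
`c 0, …, c (m-1)` via distinct items `jj 0, …, jj (m-1)`. -/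
def IsCyclicalExchange {k n : ℕ} (g : Fin k × Fin n → ℝ) : Prop :=
  ∃ (m : ℕ) (hm : 2 ≤ m) (c : Fin m → Fin k) (jj : Fin m → Fin n),
    Function.Injective c ∧ Function.Injective jj ∧
    g = ∑ t : Fin m,
      (Pi.single (c ⟨(t.1 + 1) % m, Nat.mod_lt _ (by omega)⟩, jj t) (1 : ℝ) -
        Pi.single (c t, jj t) (1 : ℝ))

/-!
Write a movement as a sum of unit moves `e (dst t, jj t) - e (src t, jj t)` of distinct items
between distinct clusters, each move starting in the cluster where the previous one ended.
Such a chain is rigid: a kernel vector whose support and nonzero cluster sums lie among those of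
the chain is, column by column, a multiple of each move, and the vanishing cluster sums at the
clusters where one move ends and the next begins force all multiples to agree. Rigidity makes
every movement a circuit.

Conversely, let `g` be a circuit. Leave a cluster through an item with a negative entry and
enter a cluster where that item has a positive entry (columns sum to zero). Started at a cluster
with negative sum, or at any negative entry when all cluster sums vanish, this walk either
reaches a cluster without negative entries, which then has positive sum, or runs into a cycle:
a sequential movement or a cyclical exchange `h` conformal to `g`. Minimality of `g` and rigidity
of `h` give `g = b • h`, and the gcd condition forces `b = 1`.
-/

open Finset Function

section Moves

variable {ι α β : Type*} [Fintype ι] [DecidableEq α] [DecidableEq β]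
  (src dst : ι → α) (jj : ι → β)

def moveVec (b : ι → ℝ) : α × β → ℝ :=
  ∑ t, b t • (Pi.single (dst t, jj t) 1 - Pi.single (src t, jj t) 1)

lemma moveVec_one : moveVec src dst jj 1 =
    ∑ t, (Pi.single (dst t, jj t) 1 - Pi.single (src t, jj t) 1) := by
  simp [moveVec]

lemma moveVec_const (a : ℝ) : moveVec src dst jj (fun _ => a) = a • moveVec src dst jj 1 := by
  simp only [moveVec, Finset.smul_sum, Pi.one_apply, one_smul]

lemma moveVec_one_apply_eq_intCast (p : α × β) : moveVec src dst jj 1 p =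
    ((∑ t, (Pi.single (dst t, jj t) 1 - Pi.single (src t, jj t) 1) : α × β → ℤ) p : ℝ) := by
  simp [moveVec, Finset.sum_apply, Pi.single_apply]

lemma exists_eq_of_moveVec_apply_ne_zero {b : ι → ℝ} {p : α × β}
    (hp : moveVec src dst jj b p ≠ 0) : ∃ t, p = (src t, jj t) ∨ p = (dst t, jj t) := by
  contrapose! hp
  exact (Finset.sum_apply p _ _).trans <| sum_eq_zero fun t _ => by simp [(hp t).1, (hp t).2]

lemma sum_moveVec_apply_col [Fintype α] (b : ι → ℝ) (j : β) :
    ∑ i, moveVec src dst jj b (i, j) = 0 := by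
  simp only [moveVec, Finset.sum_apply]
  rw [Finset.sum_comm]
  refine sum_eq_zero fun t _ => ?_
  simp only [Pi.smul_apply, Pi.sub_apply, smul_eq_mul, ← Finset.mul_sum, Finset.sum_sub_distrib,
    Pi.single_apply, Prod.mk.injEq]
  by_cases h : j = jj t <;> simp [h]

lemma sum_moveVec_apply_row [Fintype β] (b : ι → ℝ) (i : α) :
    ∑ j, moveVec src dst jj b (i, j) =
      ∑ t, ((if i = dst t then b t else 0) - if i = src t then b t else 0) := by
  simp only [moveVec, Finset.sum_apply]
  rw [Finset.sum_comm]
  refine sum_congr rfl fun t _ => ?_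
  simp only [Pi.smul_apply, Pi.sub_apply, smul_eq_mul, ← Finset.mul_sum, Finset.sum_sub_distrib,
    Pi.single_apply, Prod.mk.injEq]
  simp [ite_and, mul_sub]

variable {src dst jj}

lemma moveVec_apply_jj (hjj : Injective jj) (b : ι → ℝ) (i : α) (t : ι) :
    moveVec src dst jj b (i, jj t) =
      (if i = dst t then b t else 0) - if i = src t then b t else 0 := by
  rw [moveVec, Finset.sum_apply, Finset.sum_eq_single t (fun s _ hs => by
    simp [hjj.ne (Ne.symm hs)]) (by simp)]
  simp [Pi.single_apply, mul_sub]

lemma moveVec_apply_of_forall_ne {j : β} (hj : ∀ t, jj t ≠ j) (b : ι → ℝ) (i : α) :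
    moveVec src dst jj b (i, j) = 0 := by
  simp [moveVec, Finset.sum_apply, fun t => (hj t).symm]

lemma eq_moveVec_of_support [Fintype α] (hjj : Injective jj) (hsd : ∀ t, src t ≠ dst t)
    {y : α × β → ℝ} (hcol : ∀ j, ∑ i, y (i, j) = 0)
    (hsupp : ∀ p, y p ≠ 0 → moveVec src dst jj 1 p ≠ 0) :
    y = moveVec src dst jj fun t => y (dst t, jj t) := by
  have hzero : ∀ p, moveVec src dst jj 1 p = 0 → y p = 0 := fun p => not_imp_not.1 (hsupp p)
  funext ⟨i, j⟩
  by_cases hj : ∃ t, jj t = j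
  · obtain ⟨t, rfl⟩ := hj
    have hout : ∀ i, i ≠ src t ∧ i ≠ dst t → y (i, jj t) = 0 := fun i hi =>
      hzero _ (by simp [moveVec_apply_jj hjj, hi.1, hi.2])
    have hsrc : y (src t, jj t) = -y (dst t, jj t) := by
      linarith [Fintype.sum_eq_add _ _ (hsd t) hout ▸ hcol (jj t)]
    rw [moveVec_apply_jj hjj]
    by_cases h₁ : i = dst t
    · simp [h₁, (hsd t).symm]
    by_cases h₂ : i = src t
    · simp [h₂, hsd t, hsrc]
    simp [h₁, h₂, hout i ⟨h₂, h₁⟩]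
  · push Not at hj
    rw [moveVec_apply_of_forall_ne hj]
    exact hzero _ (moveVec_apply_of_forall_ne hj _ _)

lemma sum_moveVec_apply_row_of_dst_eq_src [Fintype β] (hsrc : Injective src)
    (hdst : Injective dst) {t t' : ι} (h : dst t = src t') (b : ι → ℝ) :
    ∑ j, moveVec src dst jj b (dst t, j) = b t - b t' := by
  classical
  have e₁ : ∀ s, dst t = dst s ↔ t = s := fun s => hdst.eq_iff
  have e₂ : ∀ s, dst t = src s ↔ t' = s := fun s => h ▸ hsrc.eq_iff
  rw [sum_moveVec_apply_row, sum_sub_distrib]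
  simp only [e₁, e₂]
  simp

lemma sum_moveVec_apply_row_path [Fintype β] {m : ℕ} (c : Fin (m + 2) → α)
    (jj : Fin (m + 1) → β) (i : α) :
    ∑ j, moveVec (fun t => c t.castSucc) (fun t => c t.succ) jj 1 (i, j) =
      (if i = c (Fin.last _) then 1 else 0) - if i = c 0 then 1 else 0 := by
  have h₁ := Fin.sum_univ_succ fun s => if i = c s then (1 : ℝ) else 0
  have h₂ := Fin.sum_univ_castSucc fun s => if i = c s then (1 : ℝ) else 0
  rw [sum_moveVec_apply_row, sum_sub_distrib]
  simp only [Pi.one_apply] at h₁ h₂ ⊢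
  linarith

lemma sum_moveVec_apply_row_cycle [Fintype β] {m : ℕ} (c : Fin (m + 2) → α)
    (jj : Fin (m + 2) → β) (i : α) :
    ∑ j, moveVec c (c ∘ finRotate (m + 2)) jj 1 (i, j) = 0 := by
  rw [sum_moveVec_apply_row, sum_sub_distrib, sub_eq_zero]
  exact Equiv.sum_comp (finRotate _) fun t => if i = c t then (1 : ℝ) else 0

end Moves

section MoveChains

variable {α β : Type*}

/-- Only the links along `Fin (m + 1)` are recorded, so a cyclical exchange is a chain as well:
its closing link is not needed for rigidity. -/
structure IsMoveChain {m : ℕ} (src dst : Fin (m + 1) → α) (jj : Fin (m + 1) → β) : Prop where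
  injective_src : Injective src
  injective_dst : Injective dst
  injective_jj : Injective jj
  src_ne_dst : ∀ t, src t ≠ dst t
  dst_castSucc : ∀ t : Fin m, dst t.castSucc = src t.succ

lemma isMoveChain_path {m : ℕ} {c : Fin (m + 2) → α} {jj : Fin (m + 1) → β}
    (hc : Injective c) (hjj : Injective jj) :
    IsMoveChain (fun t => c t.castSucc) (fun t => c t.succ) jj where
  injective_src := hc.comp (Fin.castSucc_injective _)
  injective_dst := hc.comp (Fin.succ_injective _)
  injective_jj := hjj
  src_ne_dst _ h := Fin.castSucc_lt_succ.ne (hc h)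
  dst_castSucc t := congrArg c (Fin.succ_castSucc t)

lemma isMoveChain_cycle {m : ℕ} {c : Fin (m + 2) → α} {jj : Fin (m + 2) → β}
    (hc : Injective c) (hjj : Injective jj) :
    IsMoveChain c (c ∘ finRotate (m + 2)) jj where
  injective_src := hc
  injective_dst := hc.comp (finRotate _).injective
  injective_jj := hjj
  src_ne_dst t h := by
    have := congrArg Fin.val (hc h)
    simp only [finRotate_apply, Fin.val_add_one] at this
    split_ifs at this with hl
    · simp [hl] at this
    · omega
  dst_castSucc t := by simp [Fin.coeSucc_eq_succ]

variable [DecidableEq α] [DecidableEq β] {m : ℕ} {src dst : Fin (m + 1) → α}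
  {jj : Fin (m + 1) → β}

lemma IsMoveChain.moveVec_one_apply_zero (hc : IsMoveChain src dst jj) :
    moveVec src dst jj 1 (dst 0, jj 0) = 1 := by
  simp [moveVec_apply_jj hc.injective_jj, (hc.src_ne_dst 0).symm]

lemma IsMoveChain.eq_smul_of_support [Fintype α] [Fintype β] (hc : IsMoveChain src dst jj)
    {y : α × β → ℝ} (hcol : ∀ j, ∑ i, y (i, j) = 0)
    (hsupp : ∀ p, y p ≠ 0 → moveVec src dst jj 1 p ≠ 0)
    (hrow : ∀ i, ∑ j, y (i, j) ≠ 0 → ∑ j, moveVec src dst jj 1 (i, j) ≠ 0) :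
    y = y (dst 0, jj 0) • moveVec src dst jj 1 := by
  set b : Fin (m + 1) → ℝ := fun t => y (dst t, jj t)
  have hy : y = moveVec src dst jj b :=
    eq_moveVec_of_support hc.injective_jj hc.src_ne_dst hcol hsupp
  have hstep : ∀ t : Fin m, b t.castSucc = b t.succ := fun t => by
    have hlink := hc.dst_castSucc t
    have h₁ := sum_moveVec_apply_row_of_dst_eq_src (jj := jj) hc.injective_src
      hc.injective_dst hlink 1
    have h₂ := sum_moveVec_apply_row_of_dst_eq_src (jj := jj) hc.injective_src
      hc.injective_dst hlink b
    rw [← hy] at h₂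
    by_contra hne
    exact hrow _ (by rw [h₂]; exact sub_ne_zero.2 hne) (by simp [h₁])
  have hconst : ∀ t, b t = b 0 := Fin.induction rfl fun t ht => (hstep t).symm.trans ht
  calc y = moveVec src dst jj b := hy
    _ = moveVec src dst jj fun _ => b 0 := congrArg _ (funext hconst)
    _ = y (dst 0, jj 0) • moveVec src dst jj 1 := moveVec_const _ _ _ _

end MoveChains

section Orbits

variable {α : Type*} (f : α → α)

lemma exists_mem_periodicPts_of_forall_iterate [Finite α] {D : α → Prop} {a : α}
    (h : ∀ t, D (f^[t] a)) : ∃ x ∈ periodicPts f, ∀ t, D (f^[t] x) := by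
  obtain ⟨u, v, huv, hne⟩ : ∃ u v, f^[u] a = f^[v] a ∧ u ≠ v := by
    simpa [Injective] using not_injective_infinite_finite (f^[·] a)
  wlog hlt : u < v generalizing u v
  · exact this v u huv.symm hne.symm (by omega)
  refine ⟨f^[u] a, mk_mem_periodicPts (Nat.sub_pos_of_lt hlt) ?_, fun t => ?_⟩
  · rw [IsPeriodicPt, IsFixedPt, ← iterate_add_apply, Nat.sub_add_cancel hlt.le, huv]
  · rw [← iterate_add_apply]
    exact h _

lemma injective_iterate_of_first_exit {D : α → Prop} {a : α} {m : ℕ}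
    (hD : ∀ t < m, D (f^[t] a)) (hm : ¬ D (f^[m] a)) :
    Injective fun s : Fin (m + 1) => f^[s] a := by
  intro u v huv
  by_contra hne
  wlog hlt : u < v generalizing u v
  · exact this huv.symm (Ne.symm hne) (lt_of_le_of_ne (not_lt.1 hlt) (Ne.symm hne))
  have hv : (v : ℕ) ≤ m := Nat.lt_succ_iff.1 v.2
  refine hm ?_
  have : f^[m] a = f^[m - v + u] a := by
    rw [iterate_add_apply, show f^[u] a = f^[v] a from huv, ← iterate_add_apply,
      Nat.sub_add_cancel hv]
  rw [this]
  exact hD _ (by omega)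

lemma iterate_finRotate {x : α} {m : ℕ} (hm : minimalPeriod f x = m + 2) (t : Fin (m + 2)) :
    f^[finRotate (m + 2) t] x = f (f^[t] x) := by
  rw [← iterate_succ_apply' f, ← iterate_mod_minimalPeriod_eq (n := t + 1), hm, finRotate_apply,
    Fin.val_add, Fin.val_one]

end Orbits

section Conformal

variable {α β : Type*} {g : α × β → ℝ} {J : α → β} {P : β → α}

lemma exists_conformal_cycle_of_periodic (hP : ∀ i, g (i, J i) < 0 → 0 < g (P (J i), J i))
    {x : α} (hx : x ∈ periodicPts (P ∘ J))
    (hD : ∀ t, g ((P ∘ J)^[t] x, J ((P ∘ J)^[t] x)) < 0) :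
    ∃ (m : ℕ) (c : Fin (m + 2) → α) (jj : Fin (m + 2) → β), Injective c ∧ Injective jj ∧
      ∀ t, g (c t, jj t) < 0 ∧ 0 < g (c (finRotate _ t), jj t) := by
  have hfix : ¬ IsFixedPt (P ∘ J) x := fun h => by
    have := hP x (hD 0)
    rw [show P (J x) = x from h] at this
    exact (hD 0).not_gt this
  obtain ⟨m, hm⟩ : ∃ m, minimalPeriod (P ∘ J) x = m + 2 := by
    have := minimalPeriod_pos_of_mem_periodicPts hx
    have := mt minimalPeriod_eq_one_iff_isFixedPt.1 hfix
    exact ⟨minimalPeriod (P ∘ J) x - 2, by omega⟩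
  set c : Fin (m + 2) → α := fun t => (P ∘ J)^[t] x
  have hc : Injective c := fun s t h =>
    Fin.ext (iterate_injOn_Iio_minimalPeriod (by simp [hm]) (by simp [hm]) h)
  have hrot : ∀ t, c (finRotate _ t) = P (J (c t)) := iterate_finRotate _ hm
  refine ⟨m, c, J ∘ c, hc, fun s t h => (finRotate _).injective (hc ?_), fun t => ⟨hD t, ?_⟩⟩
  · rw [hrot, hrot]
    exact congrArg P h
  · rw [hrot]
    exact hP _ (hD t)

lemma exists_conformal_path_of_exit [Fintype β] (hJ : ∀ i j, g (i, j) < 0 → g (i, J i) < 0)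
    (hP : ∀ i, g (i, J i) < 0 → 0 < g (P (J i), J i)) {a : α} (ha : g (a, J a) < 0)
    (hexit : ∃ t, ¬ g ((P ∘ J)^[t] a, J ((P ∘ J)^[t] a)) < 0) :
    ∃ (m : ℕ) (c : Fin (m + 2) → α) (jj : Fin (m + 1) → β), Injective c ∧ Injective jj ∧
      (∀ t, g (c t.castSucc, jj t) < 0 ∧ 0 < g (c t.succ, jj t)) ∧
      c 0 = a ∧ 0 < ∑ j, g (c (Fin.last _), j) := by
  classical
  obtain ⟨m, hm⟩ : ∃ m, Nat.find hexit = m + 1 :=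
    Nat.exists_eq_add_one_of_ne_zero fun h => (h ▸ Nat.find_spec hexit) ha
  have hD : ∀ t < m + 1, g ((P ∘ J)^[t] a, J ((P ∘ J)^[t] a)) < 0 := fun t ht =>
    not_not.1 (Nat.find_min hexit (hm ▸ ht))
  have hlast := hm ▸ Nat.find_spec hexit
  set c : Fin (m + 2) → α := fun s => (P ∘ J)^[s] a
  have hsucc : ∀ t : Fin (m + 1), c t.succ = P (J (c t.castSucc)) := fun t =>
    iterate_succ_apply' _ _ _
  have hc : Injective c :=
    injective_iterate_of_first_exit _ (D := fun i => g (i, J i) < 0) hD hlast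
  refine ⟨m, c, fun t => J (c t.castSucc), hc, fun s t h => Fin.succ_injective _ (hc ?_),
    fun t => ⟨hD t t.2, ?_⟩, rfl, ?_⟩
  · rw [hsucc, hsucc]
    exact congrArg P h
  · rw [hsucc]
    exact hP _ (hD t t.2)
  · refine sum_pos' (fun j _ => not_lt.1 fun h => hlast (hJ _ j h))
      ⟨J (c (Fin.last m).castSucc), mem_univ _, ?_⟩
    rw [← Fin.succ_last, hsucc]
    exact hP _ (hD m m.lt_succ_self)

lemma exists_neg_apply_and_row_sum_neg_or_eq_zero [Fintype α] [Fintype β]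
    (hcol : ∀ j, ∑ i, g (i, j) = 0) (hg : g ≠ 0) :
    ∃ a j₀, g (a, j₀) < 0 ∧ (∑ j, g (a, j) < 0 ∨ ∀ i, ∑ j, g (i, j) = 0) := by
  by_cases hneg : ∃ a, ∑ j, g (a, j) < 0
  · obtain ⟨a, ha⟩ := hneg
    obtain ⟨j₀, -, hj₀⟩ :=
      exists_lt_of_sum_lt (f := fun j => g (a, j)) (g := 0) (by simpa using ha)
    exact ⟨a, j₀, hj₀, Or.inl ha⟩
  push Not at hneg
  have htot : ∑ i, ∑ j, g (i, j) = 0 := by rw [sum_comm]; simp [hcol]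
  obtain ⟨⟨i, j⟩, hij⟩ : ∃ p, g p ≠ 0 := Function.ne_iff.1 hg
  obtain ⟨i', hi'⟩ : ∃ i', g (i', j) < 0 := by
    rcases hij.lt_or_gt with h | h
    · exact ⟨i, h⟩
    obtain ⟨i', -, hi'⟩ := exists_pos_of_sum_zero_of_exists_nonzero (fun i' => -g (i', j))
      (by simp [hcol j]) ⟨i, mem_univ _, by simp [h.ne']⟩
    exact ⟨i', neg_pos.1 hi'⟩
  exact ⟨i', j, hi', Or.inr fun i => (sum_eq_zero_iff_of_nonneg fun i _ => hneg i).1 htot i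
    (mem_univ _)⟩

lemma exists_conformal_cycle_or_path [Fintype α] [Fintype β] (hcol : ∀ j, ∑ i, g (i, j) = 0)
    (hg : g ≠ 0) :
    (∃ (m : ℕ) (c : Fin (m + 2) → α) (jj : Fin (m + 2) → β), Injective c ∧ Injective jj ∧
      ∀ t, g (c t, jj t) < 0 ∧ 0 < g (c (finRotate _ t), jj t)) ∨
    (∃ (m : ℕ) (c : Fin (m + 2) → α) (jj : Fin (m + 1) → β), Injective c ∧ Injective jj ∧
      (∀ t, g (c t.castSucc, jj t) < 0 ∧ 0 < g (c t.succ, jj t)) ∧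
      ∑ j, g (c 0, j) < 0 ∧ 0 < ∑ j, g (c (Fin.last _), j)) := by
  obtain ⟨a, j₀, ha, hstart⟩ := exists_neg_apply_and_row_sum_neg_or_eq_zero hcol hg
  have : Nonempty β := ⟨j₀⟩
  let J : α → β := fun i => Classical.epsilon fun j => g (i, j) < 0
  have hJ : ∀ i j, g (i, j) < 0 → g (i, J i) < 0 := fun i j h =>
    Classical.epsilon_spec (p := fun j => g (i, j) < 0) ⟨j, h⟩
  have : Nonempty α := ⟨a⟩
  let P : β → α := fun j => Classical.epsilon fun i => 0 < g (i, j)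
  have hP : ∀ i, g (i, J i) < 0 → 0 < g (P (J i), J i) := fun i h => by
    obtain ⟨i', -, hi'⟩ := exists_pos_of_sum_zero_of_exists_nonzero (fun i' => g (i', J i))
      (hcol _) ⟨i, mem_univ _, h.ne⟩
    exact Classical.epsilon_spec (p := fun i' => 0 < g (i', J i)) ⟨i', hi'⟩
  by_cases hexit : ∃ t, ¬ g ((P ∘ J)^[t] a, J ((P ∘ J)^[t] a)) < 0
  · obtain ⟨m, c, jj, hc, hjj, hconf, rfl, hlast⟩ :=
      exists_conformal_path_of_exit hJ hP (hJ a j₀ ha) hexit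
    exact .inr ⟨m, c, jj, hc, hjj, hconf, hstart.resolve_right fun h => hlast.ne' (h _), hlast⟩
  · push Not at hexit
    obtain ⟨x, hx, hD⟩ :=
      exists_mem_periodicPts_of_forall_iterate _ (D := fun i => g (i, J i) < 0) hexit
    exact .inl (exists_conformal_cycle_of_periodic hP hx hD)

end Conformal

section Circuits

variable {k n : ℕ}

lemma setOf_PPpmIneq_ne_zero_subset_iff {x y : Fin k × Fin n → ℝ} :
    {r | PPpmIneq y r ≠ 0} ⊆ {r | PPpmIneq x r ≠ 0} ↔
      (∀ i, ∑ j, y (i, j) ≠ 0 → ∑ j, x (i, j) ≠ 0) ∧ ∀ p, y p ≠ 0 → x p ≠ 0 := by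
  refine ⟨fun h => ⟨fun i => @h (.inr (.inl i)), fun p hp => ?_⟩, ?_⟩
  · simpa [PPpmIneq] using @h (.inr (.inr p)) (by simpa [PPpmIneq] using hp)
  · rintro ⟨hrow, hent⟩ (i | i | p) hr
    · simpa [PPpmIneq] using hrow i (by simpa [PPpmIneq] using hr)
    · exact hrow i hr
    · simpa [PPpmIneq] using hent p (by simpa [PPpmIneq] using hr)

lemma setOf_PPpmIneq_smul_ne_zero {b : ℝ} (hb : b ≠ 0) (x : Fin k × Fin n → ℝ) :
    {r | PPpmIneq (b • x) r ≠ 0} = {r | PPpmIneq x r ≠ 0} := by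
  ext (i | i | p) <;> simp [PPpmIneq, ← mul_sum, hb]

lemma isCircuitPPpm_of_rigid {h : Fin k × Fin n → ℝ} (hcol : ∀ j, ∑ i, h (i, j) = 0)
    {hz : Fin k × Fin n → ℤ} (hhz : ∀ p, h p = hz p) {p₀ : Fin k × Fin n} (hp₀ : h p₀ = 1)
    (hrigid : ∀ y : Fin k × Fin n → ℝ, (∀ j, ∑ i, y (i, j) = 0) →
      {r | PPpmIneq y r ≠ 0} ⊆ {r | PPpmIneq h r ≠ 0} → y = y p₀ • h) :
    IsCircuitPPpm h := by
  refine ⟨hcol, fun h0 => by simp [h0] at hp₀, ⟨hz, hhz, ?_⟩, ?_⟩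
  · have hz₀ : hz p₀ = 1 := by exact_mod_cast (hhz p₀).symm.trans hp₀
    exact Int.eq_one_of_dvd_one (Int.nonneg_of_normalize_eq_self normalize_gcd)
      (hz₀ ▸ gcd_dvd (mem_univ p₀))
  · rintro ⟨y, hycol, hy, hss⟩
    have hyh := hrigid y hycol hss.subset
    have hb : y p₀ ≠ 0 := fun h0 => hy (by rw [hyh, h0, zero_smul])
    exact hss.ne (by rw [hyh, setOf_PPpmIneq_smul_ne_zero hb])

lemma IsCircuitPPpm.eq_of_rigid {g h : Fin k × Fin n → ℝ} (hg : IsCircuitPPpm g)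
    (hcol : ∀ j, ∑ i, h (i, j) = 0) {hz : Fin k × Fin n → ℤ} (hhz : ∀ p, h p = hz p)
    {p₀ : Fin k × Fin n} (hp₀ : h p₀ = 1) (hgp₀ : 0 < g p₀)
    (hsub : {r | PPpmIneq h r ≠ 0} ⊆ {r | PPpmIneq g r ≠ 0})
    (hrigid : ∀ y : Fin k × Fin n → ℝ, (∀ j, ∑ i, y (i, j) = 0) →
      {r | PPpmIneq y r ≠ 0} ⊆ {r | PPpmIneq h r ≠ 0} → y = y p₀ • h) :
    g = h := by
  obtain ⟨hgcol, -, ⟨gz, hgz, hgcd⟩, hmin⟩ := hg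
  have hS : {r | PPpmIneq h r ≠ 0} = {r | PPpmIneq g r ≠ 0} := by
    by_contra hne
    exact hmin ⟨h, hcol, fun h0 => by simp [h0] at hp₀, hsub.ssubset_of_ne hne⟩
  have hgh := hrigid g hgcol hS.ge
  have hdvd : gz p₀ ∣ 1 := hgcd ▸ dvd_gcd fun p _ => ⟨hz p, by
    have : (gz p : ℝ) = gz p₀ * hz p := by rw [← hgz, ← hgz, ← hhz]; exact congrFun hgh p
    exact_mod_cast this⟩
  have hg₁ : g p₀ = 1 := by
    rw [hgz] at hgp₀ ⊢
    exact_mod_cast Int.eq_one_of_dvd_one (by exact_mod_cast hgp₀.le) hdvd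
  rw [hgh, hg₁, one_smul]

variable {m : ℕ} {src dst : Fin (m + 1) → Fin k} {jj : Fin (m + 1) → Fin n}

lemma IsMoveChain.eq_smul_of_setOf_PPpmIneq_subset (hc : IsMoveChain src dst jj)
    {y : Fin k × Fin n → ℝ} (hcol : ∀ j, ∑ i, y (i, j) = 0)
    (hsub : {r | PPpmIneq y r ≠ 0} ⊆ {r | PPpmIneq (moveVec src dst jj 1) r ≠ 0}) :
    y = y (dst 0, jj 0) • moveVec src dst jj 1 :=
  hc.eq_smul_of_support hcol (setOf_PPpmIneq_ne_zero_subset_iff.1 hsub).2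
    (setOf_PPpmIneq_ne_zero_subset_iff.1 hsub).1

lemma IsMoveChain.isCircuitPPpm (hc : IsMoveChain src dst jj) :
    IsCircuitPPpm (moveVec src dst jj 1) :=
  isCircuitPPpm_of_rigid (sum_moveVec_apply_col _ _ _ _) (moveVec_one_apply_eq_intCast _ _ _)
    hc.moveVec_one_apply_zero fun _ => hc.eq_smul_of_setOf_PPpmIneq_subset

lemma IsMoveChain.eq_of_isCircuitPPpm (hc : IsMoveChain src dst jj) {g : Fin k × Fin n → ℝ}
    (hg : IsCircuitPPpm g) (hconf : ∀ t, g (src t, jj t) < 0 ∧ 0 < g (dst t, jj t))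
    (hrow : ∀ i, ∑ j, moveVec src dst jj 1 (i, j) ≠ 0 → ∑ j, g (i, j) ≠ 0) :
    g = moveVec src dst jj 1 := by
  refine hg.eq_of_rigid (sum_moveVec_apply_col _ _ _ _) (moveVec_one_apply_eq_intCast _ _ _)
    hc.moveVec_one_apply_zero (hconf 0).2
    (setOf_PPpmIneq_ne_zero_subset_iff.2 ⟨hrow, fun p hp => ?_⟩)
    fun _ => hc.eq_smul_of_setOf_PPpmIneq_subset
  obtain ⟨t, rfl | rfl⟩ := exists_eq_of_moveVec_apply_ne_zero _ _ _ hp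
  exacts [(hconf t).1.ne, (hconf t).2.ne']

end Circuits

section Movements

variable {k n : ℕ} {g : Fin k × Fin n → ℝ}

lemma isSequentialMovement_iff :
    IsSequentialMovement g ↔ ∃ (m : ℕ) (c : Fin (m + 2) → Fin k) (jj : Fin (m + 1) → Fin n),
      Injective c ∧ Injective jj ∧
        g = moveVec (fun t => c t.castSucc) (fun t => c t.succ) jj 1 := by
  simp only [IsSequentialMovement, moveVec_one]
  constructor
  · rintro ⟨m, hm, c, jj, hc, hjj, rfl⟩
    obtain ⟨m, rfl⟩ := Nat.exists_eq_add_of_le' hm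
    exact ⟨m, c, jj, hc, hjj, rfl⟩
  · rintro ⟨m, c, jj, hc, hjj, rfl⟩
    exact ⟨m + 1, by omega, c, jj, hc, hjj, rfl⟩

lemma isCyclicalExchange_iff :
    IsCyclicalExchange g ↔ ∃ (m : ℕ) (c : Fin (m + 2) → Fin k) (jj : Fin (m + 2) → Fin n),
      Injective c ∧ Injective jj ∧ g = moveVec c (c ∘ finRotate (m + 2)) jj 1 := by
  have hrot : ∀ {m : ℕ} (t : Fin (m + 2)),
      (⟨(t.1 + 1) % (m + 2), Nat.mod_lt _ (by omega)⟩ : Fin (m + 2)) = finRotate (m + 2) t :=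
    fun t => by ext; simp [Fin.val_add]
  simp only [IsCyclicalExchange, moveVec_one, comp_apply]
  constructor
  · rintro ⟨m, hm, c, jj, hc, hjj, rfl⟩
    obtain ⟨m, rfl⟩ := Nat.exists_eq_add_of_le' hm
    exact ⟨m, c, jj, hc, hjj, by simp only [hrot]⟩
  · rintro ⟨m, c, jj, hc, hjj, rfl⟩
    exact ⟨m + 2, by omega, c, jj, hc, hjj, by simp only [hrot]⟩

lemma IsCyclicalExchange.isCircuitPPpm (hg : IsCyclicalExchange g) : IsCircuitPPpm g := by
  obtain ⟨m, c, jj, hc, hjj, rfl⟩ := isCyclicalExchange_iff.1 hg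
  exact (isMoveChain_cycle hc hjj).isCircuitPPpm

lemma IsSequentialMovement.isCircuitPPpm (hg : IsSequentialMovement g) : IsCircuitPPpm g := by
  obtain ⟨m, c, jj, hc, hjj, rfl⟩ := isSequentialMovement_iff.1 hg
  exact (isMoveChain_path hc hjj).isCircuitPPpm

lemma IsCircuitPPpm.isCyclicalExchange_or_isSequentialMovement (hg : IsCircuitPPpm g) :
    IsCyclicalExchange g ∨ IsSequentialMovement g := by
  rw [isCyclicalExchange_iff, isSequentialMovement_iff]
  rcases exists_conformal_cycle_or_path hg.1 hg.2.1 with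
    ⟨m, c, jj, hc, hjj, hconf⟩ | ⟨m, c, jj, hc, hjj, hconf, hfirst, hlast⟩
  · refine .inl ⟨m, c, jj, hc, hjj, (isMoveChain_cycle hc hjj).eq_of_isCircuitPPpm hg hconf ?_⟩
    simp [sum_moveVec_apply_row_cycle]
  · refine .inr ⟨m, c, jj, hc, hjj, (isMoveChain_path hc hjj).eq_of_isCircuitPPpm hg hconf ?_⟩
    intro i hi
    rw [sum_moveVec_apply_row_path] at hi
    by_cases h₁ : i = c (Fin.last _)
    · exact h₁ ▸ hlast.ne'
    by_cases h₂ : i = c 0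
    · exact h₂ ▸ hfirst.ne
    simp [h₁, h₂] at hi

end Movements

theorem bounded_size_partition_polytope_circuits_general
    {k n : ℕ} (g : Fin k × Fin n → ℝ) :
    IsCircuitPPpm g ↔ (IsCyclicalExchange g ∨ IsSequentialMovement g) :=
  ⟨IsCircuitPPpm.isCyclicalExchange_or_isSequentialMovement,
    fun h => h.elim IsCyclicalExchange.isCircuitPPpm IsSequentialMovement.isCircuitPPpm⟩

theorem bounded_size_partition_polytope_circuits
    {k n : ℕ} (hk : 0 < k) (hn : 0 < n) (κm κp : Fin k → ℕ) (hκ : ∀ i, κm i ≤ κp i)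
    (g : Fin k × Fin n → ℝ) :
    IsCircuitPPpm g ↔ (IsCyclicalExchange g ∨ IsSequentialMovement g) :=
  bounded_size_partition_polytope_circuits_general g
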